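/- Let Q ≥ 2 be an integer and Y = X + Z a real number where X = Σ_{i=0}^{N−1} X_i Q^i with digits X_i ∈ {1, …, Q−2}, and |Z| ≤ Q^{i₀−1} for some index i₀ with 1 ≤ i₀ ≤ N. Then for every j with i₀ ≤ j ≤ N−1, the j-th Q-ary digit of ⌊|Y|⌋ equals X_j. -/

import Mathlib

/-!
Write `X = L + Q^{i₀} H` with `L` the digits below `i₀`. Since every digit lies in `[1, Q - 2]`,
`Q^{i₀-1} ≤ L` and `L + Q^{i₀-1} < Q^{i₀}`, so a perturbation `|Z| ≤ Q^{i₀-1}` keeps `L + Z` in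
`[0, Q^{i₀})`. Hence `⌊X + Z⌋ = Q^{i₀} H + ⌊L + Z⌋` still has quotient `H` by `Q^{i₀}`, and the
digits of `H` are those of `X` from position `i₀` on.
-/

open Finset

theorem Finset.sum_range_add_mul_pow {R : Type*} [CommSemiring R] (d : ℕ → R) (Q : R) (k n : ℕ) :
    ∑ i ∈ range (k + n), d i * Q ^ i =
      ∑ i ∈ range k, d i * Q ^ i + Q ^ k * ∑ i ∈ range n, d (k + i) * Q ^ i := by
  simp only [sum_range_add, mul_sum, pow_add, mul_left_comm]

namespace Nat

variable {Q : ℕ} {d : ℕ → ℕ}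

theorem sum_range_mul_pow_lt {n : ℕ} (hd : ∀ i < n, d i < Q) :
    ∑ i ∈ range n, d i * Q ^ i < Q ^ n := by
  induction n with
  | zero => simp
  | succ n ih =>
    calc ∑ i ∈ range (n + 1), d i * Q ^ i
        < Q ^ n + d n * Q ^ n := by
          rw [sum_range_succ]
          exact Nat.add_lt_add_right (ih fun i hi => hd i (by omega)) _
      _ = (d n + 1) * Q ^ n := by ring
      _ ≤ Q ^ (n + 1) := by
          rw [pow_succ']
          exact Nat.mul_le_mul_right _ (hd n (by omega))

theorem sum_range_mul_pow_add_pow_pred_lt {n : ℕ} (hn : 0 < n) (hd : ∀ i < n, d i + 1 < Q) :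
    ∑ i ∈ range n, d i * Q ^ i + Q ^ (n - 1) < Q ^ n :=
  calc ∑ i ∈ range n, d i * Q ^ i + Q ^ (n - 1)
      ≤ ∑ i ∈ range n, d i * Q ^ i + ∑ i ∈ range n, Q ^ i := by
        gcongr
        exact single_le_sum (f := (Q ^ ·)) (fun _ _ => Nat.zero_le _) (mem_range.2 (by omega))
    _ = ∑ i ∈ range n, (d i + 1) * Q ^ i := by simp only [← sum_add_distrib, add_mul, one_mul]
    _ < Q ^ n := sum_range_mul_pow_lt hd

theorem pow_pred_le_sum_range_mul_pow {n : ℕ} (hn : 0 < n) (hd : 1 ≤ d (n - 1)) :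
    Q ^ (n - 1) ≤ ∑ i ∈ range n, d i * Q ^ i :=
  calc Q ^ (n - 1) ≤ d (n - 1) * Q ^ (n - 1) := Nat.le_mul_of_pos_left _ hd
    _ ≤ ∑ i ∈ range n, d i * Q ^ i :=
        single_le_sum (f := fun i => d i * Q ^ i) (fun _ _ => Nat.zero_le _)
          (mem_range.2 (by omega))

theorem sum_range_mul_pow_div_pow_mod {n j : ℕ} (hd : ∀ i < n, d i < Q) (hj : j < n) :
    (∑ i ∈ range n, d i * Q ^ i) / Q ^ j % Q = d j := by
  obtain ⟨m, rfl⟩ : ∃ m, n = j + (1 + m) := ⟨n - j - 1, by omega⟩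
  have hQ : 0 < Q := (Nat.zero_le _).trans_lt (hd j (by omega))
  have hlow : ∑ i ∈ range j, d i * Q ^ i < Q ^ j :=
    sum_range_mul_pow_lt fun i hi => hd i (by omega)
  rw [sum_range_add_mul_pow, Nat.add_mul_div_left _ _ (Nat.pow_pos hQ),
    Nat.div_eq_of_lt hlow, zero_add, sum_range_add_mul_pow]
  simp only [range_one, sum_singleton, add_zero, pow_zero, mul_one, pow_one]
  rw [Nat.add_mul_mod_self_left, Nat.mod_eq_of_lt (hd j (by omega))]

theorem floor_mul_add_div {α : Type*} [Semiring α] [LinearOrder α] [IsStrictOrderedRing α]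
    [FloorSemiring α] {m : ℕ} (q : ℕ) {w : α} (hw₀ : 0 ≤ w) (hw : w < m) :
    ⌊(m : α) * q + w⌋₊ / m = q := by
  have hm : 0 < m := by exact_mod_cast hw₀.trans_lt hw
  rw [add_comm, ← Nat.cast_mul, floor_add_natCast hw₀, Nat.add_mul_div_left _ _ hm,
    Nat.div_eq_of_lt ((floor_lt hw₀).2 hw), zero_add]

end Nat

theorem digit_noise_robustness_general (Q N : ℕ)
    (Xd : ℕ → ℕ) (hXd : ∀ i, 1 ≤ Xd i ∧ Xd i ≤ Q - 2)
    (X : ℝ) (hX : X = ∑ i ∈ Finset.range N, (Xd i : ℝ) * (Q : ℝ) ^ i)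
    (i₀ : ℕ) (hi₀ : 1 ≤ i₀)
    (Z Y : ℝ) (hZ : |Z| ≤ (Q : ℝ) ^ (i₀ - 1)) (hY : Y = X + Z) :
    ∀ j : ℕ, i₀ ≤ j → j ≤ N - 1 → (⌊|Y|⌋ / (Q : ℤ) ^ j) % Q = Xd j := by
  intro j hj hjN
  obtain ⟨n, rfl⟩ : ∃ n, N = i₀ + n := ⟨N - i₀, by omega⟩
  set L := ∑ i ∈ range i₀, Xd i * Q ^ i
  set H := ∑ i ∈ range n, Xd (i₀ + i) * Q ^ i
  have hXLH : X = ((Q ^ i₀ : ℕ) : ℝ) * H + L := by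
    rw [hX, add_comm _ (L : ℝ)]; exact_mod_cast sum_range_add_mul_pow Xd Q i₀ n
  have hL_ge : Q ^ (i₀ - 1) ≤ L := Nat.pow_pred_le_sum_range_mul_pow hi₀ (hXd _).1
  have hL_lt : L + Q ^ (i₀ - 1) < Q ^ i₀ :=
    Nat.sum_range_mul_pow_add_pow_pred_lt hi₀ fun i _ => by have := hXd i; omega
  have hZ' := abs_le.1 hZ
  have hLZ₀ : (0 : ℝ) ≤ L + Z := by linarith [(by exact_mod_cast hL_ge : (Q : ℝ) ^ (i₀ - 1) ≤ L)]
  have hLZ : (L : ℝ) + Z < (Q ^ i₀ : ℕ) := by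
    linarith [(by exact_mod_cast hL_lt : (L : ℝ) + (Q : ℝ) ^ (i₀ - 1) < (Q ^ i₀ : ℕ))]
  have hYLH : Y = ((Q ^ i₀ : ℕ) : ℝ) * H + (L + Z) := by rw [hY, hXLH]; ring
  have hquot : ⌊Y⌋₊ / Q ^ i₀ = H := hYLH ▸ Nat.floor_mul_add_div H hLZ₀ hLZ
  rw [abs_of_nonneg (hYLH ▸ by positivity), ← Int.natCast_floor_eq_floor (hYLH ▸ by positivity)]
  suffices ⌊Y⌋₊ / Q ^ j % Q = Xd j by exact_mod_cast this
  rw [← Nat.add_sub_cancel' hj, pow_add, ← Nat.div_div_eq_div_mul, hquot]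
  exact Nat.sum_range_mul_pow_div_pow_mod (fun i _ => by have := hXd (i₀ + i); omega) (by omega)

theorem digit_noise_robustness (Q N : ℕ) (hQ : 2 ≤ Q) (hN : 1 ≤ N)
    (Xd : ℕ → ℕ) (hXd : ∀ i, 1 ≤ Xd i ∧ Xd i ≤ Q - 2)
    (X : ℝ) (hX : X = ∑ i ∈ Finset.range N, (Xd i : ℝ) * (Q : ℝ) ^ i)
    (i₀ : ℕ) (hi₀ : 1 ≤ i₀) (hi₀N : i₀ ≤ N)
    (Z Y : ℝ) (hZ : |Z| ≤ (Q : ℝ) ^ (i₀ - 1)) (hY : Y = X + Z) :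
    ∀ j : ℕ, i₀ ≤ j → j ≤ N - 1 → (⌊|Y|⌋ / (Q : ℤ) ^ j) % Q = Xd j :=
  digit_noise_robustness_general Q N Xd hXd X hX i₀ hi₀ Z Y hZ hY
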